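/- arXiv:2501.13907 — 2 statements merged into one kernel-verified Lean document; each statement's English description precedes it below -/
import Mathlib

section
/- Let G be a graph with nonnegative vertex weights of total weight W, let w ≥ W/2, and let (H, η) be an extended strip decomposition of G whose every particle has weight at most w. Then either G admits a rigid extended strip decomposition whose every particle has weight at most w, or there exists a set X ⊆ V(G) with |X| ≤ 2 such that every connected component of G − N[X] has weight at most w. -/
/-- Closed neighborhood of a set `S` in a graph `G`. -/
def closedNbhd {V : Type*} (G : SimpleGraph V) (S : Set V) : Set V :=
  S ∪ {v | ∃ s ∈ S, G.Adj s v}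

/-- Open neighborhood of a set `S` in a graph `G`. -/
def openNbhd {V : Type*} (G : SimpleGraph V) (S : Set V) : Set V :=
  {v | v ∉ S ∧ ∃ s ∈ S, G.Adj s v}

/-- Reachability inside the induced subgraph of `G` on the vertex set `T`. -/
def ReachIn {V : Type*} (G : SimpleGraph V) (T : Set V) : V → V → Prop :=
  Relation.ReflTransGen (fun a b => G.Adj a b ∧ a ∈ T ∧ b ∈ T)

/-- Total weight of a vertex set. -/
noncomputable def wsum {V : Type*} [Fintype V] (w : V → ℕ) (S : Set V) : ℕ :=
  ∑ v ∈ S.toFinite.toFinset, w v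

/-- `l` is the vertex sequence of an induced path of `G`:
nonempty, no repetitions, and two vertices of `l` are adjacent in `G`
iff they are consecutive in `l`. -/
def IsInducedPathList {V : Type*} (G : SimpleGraph V) (l : List V) : Prop :=
  l ≠ [] ∧ l.Nodup ∧
  ∀ (i j : ℕ) (hi : i < l.length) (hj : j < l.length),
    G.Adj (l.get ⟨i, hi⟩) (l.get ⟨j, hj⟩) ↔ (i + 1 = j ∨ j + 1 = i)

/-- Every connected component of the induced subgraph of `G` on `T`
has `w`-weight at most `b`. -/
def CompsSmall {V : Type*} [Fintype V] (G : SimpleGraph V) (w : V → ℕ)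
    (T : Set V) (b : ℕ) : Prop :=
  ∀ v ∈ T, wsum w {u | ReachIn G T v u} ≤ b

/-- `x`, `y`, `z` form a triangle in `H`. -/
def Tri {H' : Type*} (H : SimpleGraph H') (x y z : H') : Prop :=
  H.Adj x y ∧ H.Adj y z ∧ H.Adj x z

/-- An extended strip decomposition `(H, η)` of a graph `G`.
`ηv x` is `η(x)`, `ηe x y` is `η(xy)`, `ηi x y` is the interface `η(xy, x)`,
and `ηt x y z` is `η(xyz)`. -/
structure ESD {V : Type*} {H' : Type*} (G : SimpleGraph V) (H : SimpleGraph H') where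
  ηv : H' → Set V
  ηe : H' → H' → Set V
  ηi : H' → H' → Set V
  ηt : H' → H' → H' → Set V
  ηe_symm : ∀ x y, ηe x y = ηe y x
  ηt_symm12 : ∀ x y z, ηt x y z = ηt y x z
  ηt_symm23 : ∀ x y z, ηt x y z = ηt x z y
  ηe_empty : ∀ x y, ¬ H.Adj x y → ηe x y = ∅
  ηt_empty : ∀ x y z, ¬ Tri H x y z → ηt x y z = ∅
  ηi_sub : ∀ x y, ηi x y ⊆ ηe x y
  cover : ∀ v : V, (∃ x, v ∈ ηv x) ∨ (∃ x y, v ∈ ηe x y) ∨ (∃ x y z, v ∈ ηt x y z)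
  disj_vv : ∀ x y, x ≠ y → ηv x ∩ ηv y = ∅
  disj_ve : ∀ x y z, ηv x ∩ ηe y z = ∅
  disj_vt : ∀ x a b c, ηv x ∩ ηt a b c = ∅
  disj_ee : ∀ x y a b, ¬ (x = a ∧ y = b) → ¬ (x = b ∧ y = a) → ηe x y ∩ ηe a b = ∅
  disj_et : ∀ x y a b c, ηe x y ∩ ηt a b c = ∅
  disj_tt : ∀ a b c d e f, ({a, b, c} : Set H') ≠ ({d, e, f} : Set H') →
    ηt a b c ∩ ηt d e f = ∅
  complete : ∀ x y z, H.Adj x y → H.Adj x z → y ≠ z →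
    ∀ u ∈ ηi x y, ∀ v ∈ ηi x z, G.Adj u v
  edge_cond : ∀ u v : V, G.Adj u v →
    (∃ x, u ∈ ηv x ∧ v ∈ ηv x) ∨
    (∃ x y, u ∈ ηe x y ∧ v ∈ ηe x y) ∨
    (∃ x y z, u ∈ ηt x y z ∧ v ∈ ηt x y z) ∨
    (∃ x y z, H.Adj x y ∧ H.Adj x z ∧ y ≠ z ∧
      ((u ∈ ηi x y ∧ v ∈ ηi x z) ∨ (v ∈ ηi x y ∧ u ∈ ηi x z))) ∨
    (∃ x y, H.Adj x y ∧ ((u ∈ ηi x y ∧ v ∈ ηv x) ∨ (v ∈ ηi x y ∧ u ∈ ηv x))) ∨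
    (∃ x y z, Tri H x y z ∧
      ((u ∈ ηt x y z ∧ v ∈ ηi x y ∩ ηi y x) ∨ (v ∈ ηt x y z ∧ u ∈ ηi x y ∩ ηi y x)))

namespace ESD

variable {V : Type*} {H' : Type*} {G : SimpleGraph V} {H : SimpleGraph H'}

/-- A rigid extended strip decomposition: every edge of `H` has nonempty interfaces
and every isolated vertex `x` of `H` has `η(x) ≠ ∅`. -/
def IsRigid (D : ESD G H) : Prop :=
  (∀ x y, H.Adj x y → (D.ηi x y).Nonempty) ∧
  (∀ x, (∀ y, ¬ H.Adj x y) → (D.ηv x).Nonempty)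

/-- A vertex `z` of `G` is peripheral in `(H, η)`. -/
def Peripheral (D : ESD G H) (z : V) : Prop :=
  ∃ x y, H.Adj x y ∧ (∀ u, H.Adj x u → u = y) ∧ D.ηi x y = {z} ∧ D.ηv x = ∅

/-- The full edge particle `A_{pq}^{pq}`. -/
def fullEdge (D : ESD G H) (p q : H') : Set V :=
  D.ηv p ∪ D.ηv q ∪ D.ηe p q ∪ {v | ∃ r, v ∈ D.ηt p q r}

/-- Every particle of `D` has `w`-weight at most `b`. -/
def ParticlesSmall [Fintype V] (D : ESD G H) (w : V → ℕ) (b : ℕ) : Prop :=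
  (∀ x, wsum w (D.ηv x) ≤ b) ∧
  (∀ x y, H.Adj x y → wsum w (D.ηe x y \ (D.ηi x y ∪ D.ηi y x)) ≤ b) ∧
  (∀ x y, H.Adj x y → wsum w (D.ηv x ∪ (D.ηe x y \ D.ηi y x)) ≤ b) ∧
  (∀ x y, H.Adj x y → wsum w (D.fullEdge x y) ≤ b) ∧
  (∀ x y z, Tri H x y z → wsum w (D.ηt x y z) ≤ b)

end ESD

/-- The subdivided claw `S_{t,t,t}`: a center vertex and three arms of length `t`. -/
def StttRel (t : ℕ) : (Unit ⊕ Fin 3 × Fin t) → (Unit ⊕ Fin 3 × Fin t) → Prop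
  | Sum.inl _, Sum.inr p => p.2.val = 0
  | Sum.inr p, Sum.inr q => p.1 = q.1 ∧ p.2.val + 1 = q.2.val
  | _, _ => False

def Sttt (t : ℕ) : SimpleGraph (Unit ⊕ Fin 3 × Fin t) :=
  SimpleGraph.fromRel (StttRel t)

/-!
Delete every edge of `H` with an empty interface, and every triangle containing such an edge,
and hand its set to a *hub*: a vertex through which all remaining attachments of the set pass
(the end carrying the nonempty interface of an edge; a vertex lying on all kept edges of a
triangle). Dropping the isolated vertices with empty `η` then leaves a rigid decomposition, whose
particles have weight at most `b` unless one of the following sets weighs more than `b`: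
the full edge of a kept edge `xy` together with the enlarged `η(x)` and `η(y)`, or the enlarged
`η(x)` of a vertex `x` on no kept edge.

In the first case take `p ∈ η(xy, x)` and `q ∈ η(xy, y)`. By completeness every other interface
at `x` or `y` lies in `N(p) ∪ N(q)`, so the heavy set is covered by particles that no edge of
`G - N[{p, q}]` leaves. A component of `G - N[{p, q}]` therefore lies in one particle, or outside
a set of weight more than `b ≥ W/2`. The second case is the same with `X = {p}` for a vertex `p`
of a nonempty interface at `x`, or `X = ∅` if there is none.
-/

section Weights

variable {V : Type*} [Fintype V] (w : V → ℕ)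

lemma wsum_mono {S T : Set V} (h : S ⊆ T) : wsum w S ≤ wsum w T :=
  Finset.sum_le_sum_of_subset (Set.Finite.toFinset_subset_toFinset.mpr h)

lemma wsum_add_wsum_compl (S : Set V) : wsum w S + wsum w Sᶜ = wsum w Set.univ := by
  classical
  simp only [wsum, Set.toFinite_toFinset, Set.toFinset_compl, Set.toFinset_univ]
  exact Finset.sum_add_sum_compl _ _

end Weights

def Sealed {V : Type*} (G : SimpleGraph V) (N S : Set V) : Prop :=
  ∀ ⦃a c⦄, G.Adj a c → a ∈ S → a ∉ N → c ∉ N → c ∈ S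

namespace Sealed

variable {V : Type*} {G : SimpleGraph V} {N S : Set V}

lemma compl (h : Sealed G N S) : Sealed G N Sᶜ :=
  fun _ _ hac ha haN hcN hc => ha (h hac.symm hc hcN haN)

lemma sUnion {R : Set (Set V)} (h : ∀ S ∈ R, Sealed G N S) : Sealed G N (⋃₀ R) := by
  rintro a c hac ⟨S, hS, ha⟩ haN hcN
  exact ⟨S, hS, h S hS hac ha haN hcN⟩

lemma reachIn_subset (h : Sealed G N S) {v : V} (hv : v ∈ S) :
    {u | ReachIn G (Set.univ \ N) v u} ⊆ S := by
  intro u hu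
  induction hu with
  | refl => exact hv
  | tail _ hstep ih => exact h hstep.1 ih hstep.2.1.2 hstep.2.2.2

end Sealed

/-- A component of `G - N` lies in one of the covering sets, or avoids them all and hence `E`,
whose complement weighs less than `b`. -/
lemma compsSmall_of_subset_sUnion_sealed {V : Type*} [Fintype V] {G : SimpleGraph V}
    {w : V → ℕ} {b : ℕ} {N E : Set V} (hW : wsum w Set.univ ≤ 2 * b) (hE : b < wsum w E)
    (hcover : E ⊆ ⋃₀ {S | Sealed G N S ∧ wsum w S ≤ b}) :
    CompsSmall G w (Set.univ \ N) b := by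
  intro v hv
  by_cases hvS : ∃ S, (Sealed G N S ∧ wsum w S ≤ b) ∧ v ∈ S
  · obtain ⟨S, ⟨hS, hSw⟩, hvS⟩ := hvS
    exact (wsum_mono w (hS.reachIn_subset hvS)).trans hSw
  · set U := ⋃₀ {S | Sealed G N S ∧ wsum w S ≤ b}
    have hU : Sealed G N Uᶜ := (Sealed.sUnion fun S hS => hS.1).compl
    have hUE : wsum w Uᶜ ≤ wsum w Eᶜ := wsum_mono w (Set.compl_subset_compl.mpr hcover)
    have := wsum_add_wsum_compl w E
    have hvU : v ∈ Uᶜ := fun ⟨S, hS, hvS'⟩ => hvS ⟨S, hS, hvS'⟩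
    have := wsum_mono w (hU.reachIn_subset hvU)
    omega

lemma Tri.swap12 {H' : Type*} {H : SimpleGraph H'} {x y z : H'} (h : Tri H x y z) :
    Tri H y x z :=
  ⟨h.1.symm, h.2.2, h.2.1⟩

lemma Tri.swap23 {H' : Type*} {H : SimpleGraph H'} {x y z : H'} (h : Tri H x y z) :
    Tri H x z y :=
  ⟨h.2.2, h.2.1.symm, h.1⟩

lemma Tri.adj_of_mem {H' : Type*} {H : SimpleGraph H'} {a b c x y : H'} (h : Tri H a b c)
    (hx : x ∈ ({a, b, c} : Set H')) (hy : y ∈ ({a, b, c} : Set H')) (hxy : x ≠ y) :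
    H.Adj x y := by
  simp only [Set.mem_insert_iff, Set.mem_singleton_iff] at hx hy
  rcases hx with rfl | rfl | rfl <;> rcases hy with rfl | rfl | rfl
  all_goals first
    | exact absurd rfl hxy
    | exact h.1 | exact h.2.1 | exact h.2.2
    | exact h.1.symm | exact h.2.1.symm | exact h.2.2.symm

namespace ESD

variable {V : Type*} {H' : Type*} {G : SimpleGraph V} {H : SimpleGraph H'} (D : ESD G H)

lemma eq_of_mem_ηv {u : V} {x y : H'} (hx : u ∈ D.ηv x) (hy : u ∈ D.ηv y) : x = y := by
  by_contra h
  exact (D.disj_vv x y h).subset ⟨hx, hy⟩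

lemma not_mem_ηe_of_mem_ηv {u : V} {x y z : H'} (hx : u ∈ D.ηv x) : u ∉ D.ηe y z :=
  fun he => (D.disj_ve x y z).subset ⟨hx, he⟩

lemma not_mem_ηt_of_mem_ηv {u : V} {x a b c : H'} (hx : u ∈ D.ηv x) : u ∉ D.ηt a b c :=
  fun ht => (D.disj_vt x a b c).subset ⟨hx, ht⟩

lemma not_mem_ηt_of_mem_ηe {u : V} {x y a b c : H'} (he : u ∈ D.ηe x y) : u ∉ D.ηt a b c :=
  fun ht => (D.disj_et x y a b c).subset ⟨he, ht⟩

lemma eq_or_swap_of_mem_ηe {u : V} {x y a b : H'} (h₁ : u ∈ D.ηe x y) (h₂ : u ∈ D.ηe a b) :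
    (x = a ∧ y = b) ∨ (x = b ∧ y = a) := by
  by_contra! h
  exact (D.disj_ee x y a b (fun h' => h.1 h'.1 h'.2) (fun h' => h.2 h'.1 h'.2)).subset ⟨h₁, h₂⟩

lemma insert_eq_of_mem_ηt {u : V} {x y z a b c : H'} (h₁ : u ∈ D.ηt x y z)
    (h₂ : u ∈ D.ηt a b c) : ({x, y, z} : Set H') = {a, b, c} := by
  by_contra h
  exact (D.disj_tt x y z a b c h).subset ⟨h₁, h₂⟩

lemma adj_of_mem_ηe {u : V} {x y : H'} (h : u ∈ D.ηe x y) : H.Adj x y := by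
  by_contra hxy
  rw [D.ηe_empty x y hxy] at h
  exact h

lemma adj_of_mem_ηi {u : V} {x y : H'} (h : u ∈ D.ηi x y) : H.Adj x y :=
  D.adj_of_mem_ηe (D.ηi_sub x y h)

lemma tri_of_mem_ηt {u : V} {x y z : H'} (h : u ∈ D.ηt x y z) : Tri H x y z := by
  by_contra hxyz
  rw [D.ηt_empty x y z hxyz] at h
  exact h

lemma mem_ηe_of_mem_ηe {u v : V} {x y a b : H'} (hu : u ∈ D.ηe x y) (hu' : u ∈ D.ηe a b)
    (hv : v ∈ D.ηe a b) : v ∈ D.ηe x y := by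
  rcases D.eq_or_swap_of_mem_ηe hu hu' with ⟨rfl, rfl⟩ | ⟨rfl, rfl⟩
  · exact hv
  · rwa [D.ηe_symm]

lemma mem_ηt_perm {u : V} {x y z a b c : H'} (hu : u ∈ D.ηt x y z)
    (ha : a ∈ ({x, y, z} : Set H')) (hb : b ∈ ({x, y, z} : Set H'))
    (hc : c ∈ ({x, y, z} : Set H')) (hab : a ≠ b) (hbc : b ≠ c) (hac : a ≠ c) :
    u ∈ D.ηt a b c := by
  simp only [Set.mem_insert_iff, Set.mem_singleton_iff] at ha hb hc
  rcases ha with rfl | rfl | rfl <;> rcases hb with rfl | rfl | rfl <;>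
    rcases hc with rfl | rfl | rfl <;>
    first
    | exact absurd rfl hab | exact absurd rfl hbc | exact absurd rfl hac
    | exact hu
    | (rw [D.ηt_symm12]; exact hu) | (rw [D.ηt_symm23]; exact hu)
    | (rw [D.ηt_symm12, D.ηt_symm23]; exact hu) | (rw [D.ηt_symm23, D.ηt_symm12]; exact hu)
    | (rw [D.ηt_symm12, D.ηt_symm23, D.ηt_symm12]; exact hu)

lemma mem_ηt_of_mem_ηt {u v : V} {x y z a b c : H'} (hu : u ∈ D.ηt x y z)
    (hu' : u ∈ D.ηt a b c) (hv : v ∈ D.ηt a b c) : v ∈ D.ηt x y z := by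
  have hset := D.insert_eq_of_mem_ηt hu hu'
  have hmem : ∀ s ∈ ({x, y, z} : Set H'), s ∈ ({a, b, c} : Set H') := fun s hs => hset ▸ hs
  obtain ⟨hxy, hyz, hxz⟩ := D.tri_of_mem_ηt hu
  exact D.mem_ηt_perm hv (hmem x (by simp)) (hmem y (by simp)) (hmem z (by simp))
    hxy.ne hyz.ne hxz.ne

lemma exists_mem_ηt_of_mem {u : V} {x y z a b : H'} (hu : u ∈ D.ηt x y z)
    (ha : a ∈ ({x, y, z} : Set H')) (hb : b ∈ ({x, y, z} : Set H')) (hab : a ≠ b) :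
    ∃ r, u ∈ D.ηt a b r := by
  obtain ⟨hxy, hyz, hxz⟩ := D.tri_of_mem_ηt hu
  have key : ∀ c ∈ ({x, y, z} : Set H'), c ≠ a → c ≠ b → ∃ r, u ∈ D.ηt a b r :=
    fun c hc hca hcb => ⟨c, D.mem_ηt_perm hu ha hb hc hab hcb.symm hca.symm⟩
  simp only [Set.mem_insert_iff, Set.mem_singleton_iff] at ha hb
  rcases ha with rfl | rfl | rfl <;> rcases hb with rfl | rfl | rfl
  all_goals first
    | exact absurd rfl hab
    | exact key x (by simp) (by simp [hxy.ne, hxz.ne]) (by simp [hxy.ne, hxz.ne])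
    | exact key y (by simp) (by simp [hxy.ne.symm, hyz.ne]) (by simp [hxy.ne.symm, hyz.ne])
    | exact key z (by simp) (by simp [hxz.ne.symm, hyz.ne.symm])
        (by simp [hxz.ne.symm, hyz.ne.symm])

/-- `ESD.edge_cond` as an inductive predicate, with one constructor per orientation of each
of its clauses. -/
inductive Link : V → V → Prop
  | vertex {x u v} : u ∈ D.ηv x → v ∈ D.ηv x → Link u v
  | edge {x y u v} : u ∈ D.ηe x y → v ∈ D.ηe x y → Link u v
  | tri {x y z u v} : u ∈ D.ηt x y z → v ∈ D.ηt x y z → Link u v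
  | ifaces {x y z u v} : y ≠ z → u ∈ D.ηi x y → v ∈ D.ηi x z → Link u v
  | ifaceVertex {x y u v} : u ∈ D.ηi x y → v ∈ D.ηv x → Link u v
  | vertexIface {x y u v} : u ∈ D.ηv x → v ∈ D.ηi x y → Link u v
  | triCore {x y z u v} : u ∈ D.ηt x y z → v ∈ D.ηi x y ∩ D.ηi y x → Link u v
  | coreTri {x y z u v} : u ∈ D.ηi x y ∩ D.ηi y x → v ∈ D.ηt x y z → Link u v

lemma link_of_adj {u v : V} (huv : G.Adj u v) : D.Link u v := by
  rcases D.edge_cond u v huv with ⟨x, hu, hv⟩ | ⟨x, y, hu, hv⟩ | ⟨x, y, z, hu, hv⟩ |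
    ⟨x, y, z, -, -, hyz, ⟨hu, hv⟩ | ⟨hv, hu⟩⟩ | ⟨x, y, -, ⟨hu, hv⟩ | ⟨hv, hu⟩⟩ |
    ⟨x, y, z, -, ⟨hu, hv⟩ | ⟨hv, hu⟩⟩
  · exact .vertex hu hv
  · exact .edge hu hv
  · exact .tri hu hv
  · exact .ifaces hyz hu hv
  · exact .ifaces hyz.symm hu hv
  · exact .ifaceVertex hu hv
  · exact .vertexIface hu hv
  · exact .triCore hu hv
  · exact .coreTri hu hv

lemma mem_fullEdge_of_mem_ηe {u : V} {z w : H'} (h : u ∈ D.ηe z w) : u ∈ D.fullEdge z w :=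
  Or.inl (Or.inr h)

lemma mem_fullEdge_of_mem_ηt {u : V} {z w r : H'} (h : u ∈ D.ηt z w r) :
    u ∈ D.fullEdge z w :=
  Or.inr ⟨r, h⟩

lemma fullEdge_comm (z w : H') : D.fullEdge z w = D.fullEdge w z := by
  simp only [fullEdge, D.ηe_symm z w, Set.union_comm (D.ηv z), D.ηt_symm12 z w]

lemma eq_or_eq_of_mem_fullEdge_of_mem_ηv {u : V} {z w x : H'} (hu : u ∈ D.fullEdge z w)
    (hx : u ∈ D.ηv x) : x = z ∨ x = w := by
  rcases hu with ((h | h) | h) | ⟨r, h⟩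
  · exact Or.inl (D.eq_of_mem_ηv hx h)
  · exact Or.inr (D.eq_of_mem_ηv hx h)
  · exact absurd h (D.not_mem_ηe_of_mem_ηv hx)
  · exact absurd h (D.not_mem_ηt_of_mem_ηv hx)

lemma eq_or_swap_of_mem_fullEdge_of_mem_ηe {u : V} {z w x y : H'} (hu : u ∈ D.fullEdge z w)
    (he : u ∈ D.ηe x y) : (x = z ∧ y = w) ∨ (x = w ∧ y = z) := by
  rcases hu with ((h | h) | h) | ⟨r, h⟩
  · exact absurd he (D.not_mem_ηe_of_mem_ηv h)
  · exact absurd he (D.not_mem_ηe_of_mem_ηv h)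
  · exact D.eq_or_swap_of_mem_ηe he h
  · exact absurd h (D.not_mem_ηt_of_mem_ηe he)

lemma exists_mem_ηt_of_mem_fullEdge {u : V} {z w x y r : H'} (hu : u ∈ D.fullEdge z w)
    (ht : u ∈ D.ηt x y r) : ∃ r', u ∈ D.ηt z w r' := by
  rcases hu with ((h | h) | h) | ⟨r', h⟩
  · exact absurd ht (D.not_mem_ηt_of_mem_ηv h)
  · exact absurd ht (D.not_mem_ηt_of_mem_ηv h)
  · exact absurd ht (D.not_mem_ηt_of_mem_ηe h)
  · exact ⟨r', h⟩

lemma ηi_subset_closedNbhd {x y d : H'} {p : V} {S : Set V} (hp : p ∈ D.ηi x y) (hpS : p ∈ S)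
    (hdy : d ≠ y) : D.ηi x d ⊆ closedNbhd G S := fun _ hv =>
  Or.inr ⟨p, hpS, D.complete x y d (D.adj_of_mem_ηi hp) (D.adj_of_mem_ηi hv) hdy.symm p hp _ hv⟩

section Sealing

variable {N : Set V}

lemma sealed_ηe {x y : H'} (hx : D.ηi x y ⊆ N) (hy : D.ηi y x ⊆ N) :
    Sealed G N (D.ηe x y) := by
  have hI : ∀ {a : V} {s o : H'}, a ∈ D.ηe x y → a ∈ D.ηi s o → a ∈ N := by
    intro a s o ha hso
    rcases D.eq_or_swap_of_mem_ηe (D.ηi_sub s o hso) ha with ⟨rfl, rfl⟩ | ⟨rfl, rfl⟩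
    exacts [hx hso, hy hso]
  intro a c hac ha haN _
  cases D.link_of_adj hac with
  | vertex hu _ | vertexIface hu _ => exact absurd ha (D.not_mem_ηe_of_mem_ηv hu)
  | edge hu hv => exact D.mem_ηe_of_mem_ηe ha hu hv
  | tri hu _ | triCore hu _ => exact absurd hu (D.not_mem_ηt_of_mem_ηe ha)
  | ifaces _ hu _ | ifaceVertex hu _ => exact absurd (hI ha hu) haN
  | coreTri hu _ => exact absurd (hI ha hu.1) haN

lemma sealed_ηt {x y z : H'}
    (hcore : ∀ a ∈ ({x, y, z} : Set H'), ∀ b ∈ ({x, y, z} : Set H'), D.ηi a b ∩ D.ηi b a ⊆ N) :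
    Sealed G N (D.ηt x y z) := by
  intro a c hac ha _ hcN
  cases D.link_of_adj hac with
  | vertex hu _ | vertexIface hu _ => exact absurd ha (D.not_mem_ηt_of_mem_ηv hu)
  | edge hu _ => exact absurd ha (D.not_mem_ηt_of_mem_ηe hu)
  | ifaces _ hu _ | ifaceVertex hu _ =>
    exact absurd ha (D.not_mem_ηt_of_mem_ηe (D.ηi_sub _ _ hu))
  | coreTri hu _ => exact absurd ha (D.not_mem_ηt_of_mem_ηe (D.ηi_sub _ _ hu.1))
  | tri hu hv => exact D.mem_ηt_of_mem_ηt ha hu hv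
  | triCore hu hv =>
    have hset := D.insert_eq_of_mem_ηt hu ha
    exact absurd (hcore _ (hset ▸ by simp) _ (hset ▸ by simp) hv) hcN

lemma sealed_ηv_union_ηe {x c : H'} (hcx : D.ηi c x = ∅) (hcov : ∀ d, d ≠ c → D.ηi x d ⊆ N) :
    Sealed G N (D.ηv x ∪ D.ηe x c) := by
  have hI : ∀ {a : V} {s o : H'}, a ∈ D.ηe x c → a ∈ D.ηi s o → s = x ∧ o = c := by
    intro a s o ha hso
    rcases D.eq_or_swap_of_mem_ηe (D.ηi_sub s o hso) ha with h | ⟨rfl, rfl⟩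
    · exact h
    · exact absurd (hcx ▸ hso) (Set.notMem_empty a)
  intro a c' hac ha haN hcN
  rcases ha with ha | ha
  · cases D.link_of_adj hac with
    | vertex hu hv => exact Or.inl (D.eq_of_mem_ηv hu ha ▸ hv)
    | @vertexIface _ y _ _ hu hv =>
      obtain rfl := D.eq_of_mem_ηv hu ha
      by_cases hyc : y = c
      · exact Or.inr (hyc ▸ D.ηi_sub _ _ hv)
      · exact absurd (hcov _ hyc hv) hcN
    | edge hu _ => exact absurd hu (D.not_mem_ηe_of_mem_ηv ha)
    | tri hu _ | triCore hu _ => exact absurd hu (D.not_mem_ηt_of_mem_ηv ha)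
    | ifaces _ hu _ | ifaceVertex hu _ => exact absurd (D.ηi_sub _ _ hu) (D.not_mem_ηe_of_mem_ηv ha)
    | coreTri hu _ => exact absurd (D.ηi_sub _ _ hu.1) (D.not_mem_ηe_of_mem_ηv ha)
  · cases D.link_of_adj hac with
    | vertex hu _ | vertexIface hu _ => exact absurd ha (D.not_mem_ηe_of_mem_ηv hu)
    | edge hu hv => exact Or.inr (D.mem_ηe_of_mem_ηe ha hu hv)
    | tri hu _ | triCore hu _ => exact absurd hu (D.not_mem_ηt_of_mem_ηe ha)
    | ifaces hyz hu hv =>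
      obtain ⟨rfl, rfl⟩ := hI ha hu
      exact absurd (hcov _ hyz.symm hv) hcN
    | ifaceVertex hu hv =>
      obtain ⟨rfl, rfl⟩ := hI ha hu
      exact Or.inl hv
    | coreTri hu _ =>
      obtain ⟨rfl, rfl⟩ := hI ha hu.1
      exact absurd (hcx ▸ hu.2) (Set.notMem_empty a)

lemma mem_fullEdge_of_mem_core {z w x y r : H'} {a c : V} (hz : ∀ d, d ≠ w → D.ηi z d ⊆ N)
    (hw : ∀ d, d ≠ z → D.ηi w d ⊆ N) (ha : a ∈ D.fullEdge z w) (hu : a ∈ D.ηt x y r)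
    (hv : c ∈ D.ηi x y ∩ D.ηi y x) (hcN : c ∉ N) : c ∈ D.fullEdge z w := by
  obtain ⟨r', hr'⟩ := D.exists_mem_ηt_of_mem_fullEdge ha hu
  by_cases hxz : x = z
  · subst hxz
    by_cases hyw : y = w
    · subst hyw
      exact D.mem_fullEdge_of_mem_ηe (D.ηi_sub _ _ hv.1)
    · exact absurd (hz y hyw hv.1) hcN
  by_cases hxw : x = w
  · subst hxw
    by_cases hyz : y = z
    · subst hyz
      exact D.mem_fullEdge_of_mem_ηe (D.ηe_symm _ _ ▸ D.ηi_sub _ _ hv.1)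
    · exact absurd (hw y hyz hv.1) hcN
  by_cases hyz : y = z
  · subst hyz
    exact absurd (hz x hxw hv.2) hcN
  by_cases hyw : y = w
  · subst hyw
    exact absurd (hw x hxz hv.2) hcN
  -- otherwise `z` and `w` would both be the third vertex `r` of the triangle
  have hset := D.insert_eq_of_mem_ηt hr' hu
  have hz' : z ∈ ({x, y, r} : Set H') := hset ▸ by simp
  have hw' : w ∈ ({x, y, r} : Set H') := hset ▸ by simp
  simp only [Set.mem_insert_iff, Set.mem_singleton_iff] at hz' hw'
  obtain ⟨hzw, -, -⟩ := D.tri_of_mem_ηt hr'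
  exact absurd (by grind) hzw.ne

lemma sealed_fullEdge {z w : H'} (hz : ∀ d, d ≠ w → D.ηi z d ⊆ N)
    (hw : ∀ d, d ≠ z → D.ηi w d ⊆ N) : Sealed G N (D.fullEdge z w) := by
  intro a c hac ha haN hcN
  cases D.link_of_adj hac with
  | vertex hu hv =>
    rcases D.eq_or_eq_of_mem_fullEdge_of_mem_ηv ha hu with rfl | rfl
    exacts [Or.inl (Or.inl (Or.inl hv)), Or.inl (Or.inl (Or.inr hv))]
  | edge hu hv =>
    rcases D.eq_or_swap_of_mem_fullEdge_of_mem_ηe ha hu with ⟨rfl, rfl⟩ | ⟨rfl, rfl⟩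
    · exact D.mem_fullEdge_of_mem_ηe hv
    · exact D.mem_fullEdge_of_mem_ηe (D.ηe_symm _ _ ▸ hv)
  | tri hu hv =>
    obtain ⟨r', hr'⟩ := D.exists_mem_ηt_of_mem_fullEdge ha hu
    exact D.mem_fullEdge_of_mem_ηt (D.mem_ηt_of_mem_ηt hr' hu hv)
  | ifaces hyz hu hv =>
    rcases D.eq_or_swap_of_mem_fullEdge_of_mem_ηe ha (D.ηi_sub _ _ hu) with ⟨rfl, rfl⟩ | ⟨rfl, rfl⟩
    · exact absurd (hz _ hyz.symm hv) hcN
    · exact absurd (hw _ hyz.symm hv) hcN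
  | ifaceVertex hu hv =>
    rcases D.eq_or_swap_of_mem_fullEdge_of_mem_ηe ha (D.ηi_sub _ _ hu) with ⟨rfl, rfl⟩ | ⟨rfl, rfl⟩
    exacts [Or.inl (Or.inl (Or.inl hv)), Or.inl (Or.inl (Or.inr hv))]
  | @vertexIface _ y _ _ hu hv =>
    rcases D.eq_or_eq_of_mem_fullEdge_of_mem_ηv ha hu with rfl | rfl
    · by_cases hyw : y = w
      · exact D.mem_fullEdge_of_mem_ηe (hyw ▸ D.ηi_sub _ _ hv)
      · exact absurd (hz _ hyw hv) hcN
    · by_cases hyz : y = z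
      · exact D.mem_fullEdge_of_mem_ηe (D.ηe_symm _ _ ▸ hyz ▸ D.ηi_sub _ _ hv)
      · exact absurd (hw _ hyz hv) hcN
  | triCore hu hv => exact D.mem_fullEdge_of_mem_core hz hw ha hu hv hcN
  | coreTri hu hv =>
    rcases D.eq_or_swap_of_mem_fullEdge_of_mem_ηe ha (D.ηi_sub _ _ hu.1) with
      ⟨rfl, rfl⟩ | ⟨rfl, rfl⟩
    · exact D.mem_fullEdge_of_mem_ηt hv
    · exact D.mem_fullEdge_of_mem_ηt (D.ηt_symm12 _ _ _ ▸ hv)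

end Sealing

def kept (x y : H') : Prop := H.Adj x y ∧ (D.ηi x y).Nonempty ∧ (D.ηi y x).Nonempty

variable {D}

lemma kept.symm {x y : H'} (h : D.kept x y) : D.kept y x := ⟨h.1.symm, h.2.2, h.2.1⟩

lemma kept_comm {x y : H'} : D.kept x y ↔ D.kept y x := ⟨kept.symm, kept.symm⟩

lemma kept_of_mem_core {v : V} {x y : H'} (hv : v ∈ D.ηi x y ∩ D.ηi y x) : D.kept x y :=
  ⟨D.adj_of_mem_ηi hv.1, ⟨v, hv.1⟩, ⟨v, hv.2⟩⟩

variable (D)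

def keptGraph : SimpleGraph H' where
  Adj := D.kept
  symm := ⟨fun _ _ h => h.symm⟩
  loopless := ⟨fun x h => H.loopless.irrefl x h.1⟩

abbrev keptTri (x y z : H') : Prop := Tri D.keptGraph x y z

def edgeHubs (x y : H') : Set H' := {s | (s = x ∧ D.ηi y x = ∅) ∨ (s = y ∧ D.ηi x y = ∅)}

def hubs (T : Set H') : Set H' := {s ∈ T | ∀ a ∈ T, ∀ b ∈ T, D.kept a b → s = a ∨ s = b}

/- `Classical.epsilon` depends only on the predicate, so the targets below do not depend on the
order of `x, y, z`. -/

noncomputable def edgeTarget (x y : H') : H' :=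
  @Classical.epsilon H' ⟨x⟩ (· ∈ D.edgeHubs x y)

noncomputable def triTarget (x y z : H') : H' :=
  @Classical.epsilon H' ⟨x⟩ (· ∈ D.hubs {x, y, z})

def deadEdgePart (t : H') : Set V :=
  {v | ∃ d, ¬ D.kept t d ∧ D.edgeTarget t d = t ∧ v ∈ D.ηe t d}

def deadTriPart (t : H') : Set V :=
  {v | ∃ x y z, ¬ D.keptTri x y z ∧ D.triTarget x y z = t ∧ v ∈ D.ηt x y z}

def cleanV (t : H') : Set V := D.ηv t ∪ D.deadEdgePart t ∪ D.deadTriPart t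

lemma subset_fullEdge {x y : H'} :
    D.ηv x ∪ D.ηe x y ∪ {v | D.kept x y ∧ ∃ r, v ∈ D.ηt x y r} ⊆ D.fullEdge x y := by
  rintro v ((hv | hv) | ⟨-, r, hv⟩)
  exacts [Or.inl (Or.inl (Or.inl hv)), D.mem_fullEdge_of_mem_ηe hv, D.mem_fullEdge_of_mem_ηt hv]

lemma edgeTarget_comm (x y : H') : D.edgeTarget x y = D.edgeTarget y x := by
  have : D.edgeHubs x y = D.edgeHubs y x := Set.ext fun _ => or_comm
  simp only [edgeTarget, this]

lemma edgeTarget_mem_edgeHubs {x y : H'} (hxy : H.Adj x y) (hk : ¬ D.kept x y) :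
    D.edgeTarget x y ∈ D.edgeHubs x y := by
  refine Classical.epsilon_spec (p := (· ∈ D.edgeHubs x y)) ?_
  by_cases hyx : D.ηi y x = ∅
  · exact ⟨x, Or.inl ⟨rfl, hyx⟩⟩
  · refine ⟨y, Or.inr ⟨rfl, Set.not_nonempty_iff_eq_empty.mp fun hne => hk ⟨hxy, hne, ?_⟩⟩⟩
    exact Set.nonempty_iff_ne_empty.mpr hyx

lemma ηi_eq_empty_of_edgeTarget_eq {x y : H'} (hxy : H.Adj x y) (hk : ¬ D.kept x y)
    (ht : D.edgeTarget x y = x) : D.ηi y x = ∅ := by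
  rcases D.edgeTarget_mem_edgeHubs hxy hk with ⟨-, h⟩ | ⟨h, -⟩
  · exact h
  · exact absurd (ht ▸ h) hxy.ne

lemma edgeTarget_eq_of_nonempty {x y : H'} (hk : ¬ D.kept x y) (hne : (D.ηi x y).Nonempty) :
    D.edgeTarget x y = x := by
  rcases D.edgeTarget_mem_edgeHubs (D.adj_of_mem_ηi hne.some_mem) hk with ⟨h, -⟩ | ⟨-, h⟩
  · exact h
  · exact absurd h hne.ne_empty

lemma mem_deadEdgePart_edgeTarget {v : V} {x y : H'} (hk : ¬ D.kept x y) (hv : v ∈ D.ηe x y) :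
    v ∈ D.deadEdgePart (D.edgeTarget x y) := by
  rcases D.edgeTarget_mem_edgeHubs (D.adj_of_mem_ηe hv) hk with ⟨h, -⟩ | ⟨h, -⟩ <;> rw [h]
  · exact ⟨y, hk, h, hv⟩
  · exact ⟨x, kept_comm.not.mp hk, D.edgeTarget_comm y x ▸ h, D.ηe_symm x y ▸ hv⟩

lemma mem_hubs_of_not_kept {x y z : H'} (hyz : ¬ D.kept y z) : x ∈ D.hubs {x, y, z} := by
  refine ⟨by simp, fun a ha b hb hab => ?_⟩
  simp only [Set.mem_insert_iff, Set.mem_singleton_iff] at ha hb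
  have hirr : ∀ s, ¬ D.kept s s := fun s h => H.loopless.irrefl s h.1
  rcases ha with rfl | rfl | rfl <;> rcases hb with rfl | rfl | rfl <;>
    first
    | exact Or.inl rfl
    | exact Or.inr rfl
    | exact absurd hab (hirr _)
    | exact absurd hab hyz
    | exact absurd hab.symm hyz

lemma triTarget_mem_hubs {x y z : H'} (hk : ¬ D.keptTri x y z) :
    D.triTarget x y z ∈ D.hubs {x, y, z} := by
  refine Classical.epsilon_spec (p := (· ∈ D.hubs {x, y, z})) ?_
  by_cases hxy : D.kept x y
  · by_cases hyz : D.kept y z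
    · refine ⟨y, ?_⟩
      rw [Set.insert_comm]
      exact D.mem_hubs_of_not_kept fun hxz => hk ⟨hxy, hyz, hxz⟩
    · exact ⟨x, D.mem_hubs_of_not_kept hyz⟩
  · refine ⟨z, ?_⟩
    rw [Set.insert_comm, Set.pair_comm, Set.insert_comm]
    exact D.mem_hubs_of_not_kept fun hyx => hxy hyx.symm

lemma triTarget_congr {x y z a b c : H'} (h : ({x, y, z} : Set H') = {a, b, c}) :
    D.triTarget x y z = D.triTarget a b c := by
  simp only [triTarget, h]

lemma eq_of_mem_deadEdgePart {v : V} {t t' : H'} (h : v ∈ D.deadEdgePart t)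
    (h' : v ∈ D.deadEdgePart t') : t = t' := by
  obtain ⟨d, -, ht, hv⟩ := h
  obtain ⟨d', -, ht', hv'⟩ := h'
  rcases D.eq_or_swap_of_mem_ηe hv hv' with ⟨h, -⟩ | ⟨h₁, h₂⟩
  · exact h
  · subst h₁ h₂
    exact ht.symm.trans ((D.edgeTarget_comm _ _).trans ht')

lemma eq_of_mem_deadTriPart {v : V} {t t' : H'} (h : v ∈ D.deadTriPart t)
    (h' : v ∈ D.deadTriPart t') : t = t' := by
  obtain ⟨x, y, z, -, rfl, hv⟩ := h
  obtain ⟨x', y', z', -, rfl, hv'⟩ := h'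
  exact D.triTarget_congr (D.insert_eq_of_mem_ηt hv hv')

lemma eq_of_mem_cleanV {v : V} {t t' : H'} (h : v ∈ D.cleanV t) (h' : v ∈ D.cleanV t') :
    t = t' := by
  have hE : ∀ {s}, v ∈ D.deadEdgePart s → ∃ x y, v ∈ D.ηe x y := fun ⟨d, _, _, he⟩ => ⟨_, d, he⟩
  have hT : ∀ {s}, v ∈ D.deadTriPart s → ∃ x y z, v ∈ D.ηt x y z :=
    fun ⟨x, y, z, _, _, ht⟩ => ⟨x, y, z, ht⟩
  rcases h with (h | h) | h <;> rcases h' with (h' | h') | h'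
  · exact D.eq_of_mem_ηv h h'
  · obtain ⟨_, _, he⟩ := hE h'; exact absurd he (D.not_mem_ηe_of_mem_ηv h)
  · obtain ⟨_, _, _, ht⟩ := hT h'; exact absurd ht (D.not_mem_ηt_of_mem_ηv h)
  · obtain ⟨_, _, he⟩ := hE h; exact absurd he (D.not_mem_ηe_of_mem_ηv h')
  · exact D.eq_of_mem_deadEdgePart h h'
  · obtain ⟨_, _, he⟩ := hE h; obtain ⟨_, _, _, ht⟩ := hT h'
    exact absurd ht (D.not_mem_ηt_of_mem_ηe he)
  · obtain ⟨_, _, _, ht⟩ := hT h; exact absurd ht (D.not_mem_ηt_of_mem_ηv h')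
  · obtain ⟨_, _, he⟩ := hE h'; obtain ⟨_, _, _, ht⟩ := hT h
    exact absurd ht (D.not_mem_ηt_of_mem_ηe he)
  · exact D.eq_of_mem_deadTriPart h h'

section Separation

variable {D} [Fintype V] {w : V → ℕ} {b : ℕ}

lemma ParticlesSmall.wsum_fullEdge_le (hD : D.ParticlesSmall w b) {x y : H'} (hxy : H.Adj x y) :
    wsum w (D.fullEdge x y) ≤ b :=
  hD.2.2.2.1 x y hxy

lemma ParticlesSmall.wsum_ηt_le (hD : D.ParticlesSmall w b) {x y z : H'} (h : Tri H x y z) :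
    wsum w (D.ηt x y z) ≤ b :=
  hD.2.2.2.2 x y z h

lemma ParticlesSmall.wsum_ηv_union_ηe_le (hD : D.ParticlesSmall w b) (x y : H') :
    wsum w (D.ηv x ∪ D.ηe x y) ≤ b := by
  by_cases hxy : H.Adj x y
  · refine (wsum_mono w ?_).trans (hD.wsum_fullEdge_le hxy)
    rintro v (hv | hv)
    exacts [Or.inl (Or.inl (Or.inl hv)), D.mem_fullEdge_of_mem_ηe hv]
  · rw [D.ηe_empty x y hxy, Set.union_empty]
    exact hD.1 x

lemma ParticlesSmall.wsum_ηe_le (hD : D.ParticlesSmall w b) (x y : H') :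
    wsum w (D.ηe x y) ≤ b :=
  (wsum_mono w Set.subset_union_right).trans (hD.wsum_ηv_union_ηe_le x y)

lemma cleanV_subset_sUnion_sealed (hD : D.ParticlesSmall w b) {t c : H'} {N : Set V}
    (hcov : ∀ d, d ≠ c → D.ηi t d ⊆ N) :
    D.cleanV t ⊆ D.ηv t ∪ D.ηe t c ∪ {v | D.kept t c ∧ ∃ r, v ∈ D.ηt t c r} ∪
      ⋃₀ {S | Sealed G N S ∧ wsum w S ≤ b} := by
  rintro v ((hv | ⟨d, hk, ht, hv⟩) | ⟨x, y, z, hk, ht, hv⟩)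
  · exact Or.inl (Or.inl (Or.inl hv))
  · by_cases hdc : d = c
    · subst hdc
      exact Or.inl (Or.inl (Or.inr hv))
    · have hdt := D.ηi_eq_empty_of_edgeTarget_eq (D.adj_of_mem_ηe hv) hk ht
      exact Or.inr ⟨D.ηe t d, ⟨D.sealed_ηe (hcov d hdc) (hdt ▸ Set.empty_subset N),
        hD.wsum_ηe_le t d⟩, hv⟩
  · obtain ⟨htmem, hthub⟩ := ht ▸ D.triTarget_mem_hubs hk
    by_cases hc : D.kept t c ∧ c ∈ ({x, y, z} : Set H')
    · obtain ⟨r, hr⟩ := D.exists_mem_ηt_of_mem hv htmem hc.2 hc.1.1.ne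
      exact Or.inl (Or.inr ⟨hc.1, r, hr⟩)
    refine Or.inr ⟨D.ηt x y z, ⟨D.sealed_ηt ?_, hD.wsum_ηt_le (D.tri_of_mem_ηt hv)⟩, hv⟩
    -- a kept edge of the triangle passes through its hub `t`, and not towards `c`
    intro a ha a' ha' u hu
    have hka := kept_of_mem_core hu
    rcases hthub a ha a' ha' hka with rfl | rfl
    · exact hcov a' (fun h => hc ⟨h ▸ hka, h ▸ ha'⟩) hu.1
    · exact hcov a (fun h => hc ⟨h ▸ hka.symm, h ▸ ha⟩) hu.2

lemma exists_compsSmall_of_kept (hD : D.ParticlesSmall w b) (hW : wsum w Set.univ ≤ 2 * b)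
    {x y : H'} (hk : D.kept x y)
    (hbig : b < wsum w (D.fullEdge x y ∪ D.cleanV x ∪ D.cleanV y)) :
    ∃ X : Finset V, X.card ≤ 2 ∧ CompsSmall G w (Set.univ \ closedNbhd G ↑X) b := by
  classical
  obtain ⟨hxy, ⟨p, hp⟩, ⟨q, hq⟩⟩ := hk
  refine ⟨{p, q}, Finset.card_le_two, compsSmall_of_subset_sUnion_sealed hW hbig ?_⟩
  have hcovx : ∀ d, d ≠ y → D.ηi x d ⊆ closedNbhd G ↑({p, q} : Finset V) :=
    fun _ hd => D.ηi_subset_closedNbhd hp (by simp) hd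
  have hcovy : ∀ d, d ≠ x → D.ηi y d ⊆ closedNbhd G ↑({p, q} : Finset V) :=
    fun _ hd => D.ηi_subset_closedNbhd hq (by simp) hd
  have hfull : D.fullEdge x y ∈
      {S | Sealed G (closedNbhd G ↑({p, q} : Finset V)) S ∧ wsum w S ≤ b} :=
    ⟨D.sealed_fullEdge hcovx hcovy, hD.wsum_fullEdge_le hxy⟩
  rintro v ((hv | hv) | hv)
  · exact ⟨_, hfull, hv⟩
  · rcases D.cleanV_subset_sUnion_sealed hD hcovx hv with h | h
    exacts [⟨_, hfull, D.subset_fullEdge h⟩, h]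
  · rcases D.cleanV_subset_sUnion_sealed hD hcovy hv with h | h
    exacts [⟨_, hfull, D.fullEdge_comm y x ▸ D.subset_fullEdge h⟩, h]

lemma compsSmall_of_not_kept (hD : D.ParticlesSmall w b) (hW : wsum w Set.univ ≤ 2 * b)
    {x c : H'} {N : Set V} (hx : ∀ d, ¬ D.kept x d) (hbig : b < wsum w (D.cleanV x))
    (hcx : D.ηi c x = ∅) (hcov : ∀ d, d ≠ c → D.ηi x d ⊆ N) :
    CompsSmall G w (Set.univ \ N) b := by
  refine compsSmall_of_subset_sUnion_sealed hW hbig fun v hv => ?_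
  rcases D.cleanV_subset_sUnion_sealed hD hcov hv with (h | ⟨hk, -⟩) | h
  · exact ⟨_, ⟨D.sealed_ηv_union_ηe hcx hcov, hD.wsum_ηv_union_ηe_le x c⟩, h⟩
  · exact absurd hk (hx c)
  · exact h

lemma exists_compsSmall_of_not_kept (hD : D.ParticlesSmall w b)
    (hW : wsum w Set.univ ≤ 2 * b) {x : H'} (hx : ∀ d, ¬ D.kept x d)
    (hbig : b < wsum w (D.cleanV x)) :
    ∃ X : Finset V, X.card ≤ 2 ∧ CompsSmall G w (Set.univ \ closedNbhd G ↑X) b := by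
  by_cases hc : ∃ c, (D.ηi x c).Nonempty
  · obtain ⟨c, p, hp⟩ := hc
    have hcx : D.ηi c x = ∅ := Set.not_nonempty_iff_eq_empty.mp fun hne =>
      hx c ⟨D.adj_of_mem_ηi hp, ⟨p, hp⟩, hne⟩
    exact ⟨{p}, by simp, D.compsSmall_of_not_kept hD hW hx hbig hcx
      fun _ hd => D.ηi_subset_closedNbhd hp (by simp) hd⟩
  · simp only [not_exists, Set.not_nonempty_iff_eq_empty] at hc
    exact ⟨∅, by simp, D.compsSmall_of_not_kept hD hW hx hbig (hc x)
      fun d _ => (hc d).symm ▸ Set.empty_subset _⟩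

end Separation

lemma kept_or_mem_cleanV_of_mem_ηi {v : V} {x y : H'} (hv : v ∈ D.ηi x y) :
    D.kept x y ∨ v ∈ D.cleanV x := by
  by_cases hk : D.kept x y
  · exact Or.inl hk
  · exact Or.inr (Or.inl (Or.inr ⟨y, hk, D.edgeTarget_eq_of_nonempty hk ⟨v, hv⟩, D.ηi_sub x y hv⟩))

lemma not_mem_cleanV_of_kept {v : V} {t x y : H'} (hk : D.kept x y) (hv : v ∈ D.ηe x y) :
    v ∉ D.cleanV t := by
  rintro ((h | ⟨d, hkd, -, hd⟩) | ⟨_, _, _, -, -, h⟩)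
  · exact D.not_mem_ηe_of_mem_ηv h hv
  · rcases D.eq_or_swap_of_mem_ηe hv hd with ⟨rfl, rfl⟩ | ⟨rfl, rfl⟩
    exacts [hkd hk, hkd hk.symm]
  · exact D.not_mem_ηt_of_mem_ηe hv h

lemma not_mem_cleanV_of_keptTri {v : V} {t x y z : H'} (hk : D.keptTri x y z)
    (hv : v ∈ D.ηt x y z) : v ∉ D.cleanV t := by
  rintro ((h | ⟨_, -, -, h⟩) | ⟨a, b, c, hkabc, -, h⟩)
  · exact D.not_mem_ηt_of_mem_ηv h hv
  · exact D.not_mem_ηt_of_mem_ηe h hv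
  · have hset := D.insert_eq_of_mem_ηt hv h
    obtain ⟨hab, hbc, hac⟩ := D.tri_of_mem_ηt h
    exact hkabc ⟨hk.adj_of_mem (hset ▸ by simp) (hset ▸ by simp) hab.ne,
      hk.adj_of_mem (hset ▸ by simp) (hset ▸ by simp) hbc.ne,
      hk.adj_of_mem (hset ▸ by simp) (hset ▸ by simp) hac.ne⟩

lemma exists_kept_of_not_keptTri {u v : V} {x y z : H'} (hkt : ¬ D.keptTri x y z)
    (hu : u ∈ D.ηt x y z) (hv : v ∈ D.ηi x y ∩ D.ηi y x) :
    ∃ s o, D.kept s o ∧ v ∈ D.ηi s o ∧ u ∈ D.cleanV s := by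
  have hk := kept_of_mem_core hv
  have hu' : u ∈ D.cleanV (D.triTarget x y z) := Or.inr ⟨x, y, z, hkt, rfl, hu⟩
  rcases (D.triTarget_mem_hubs hkt).2 x (by simp) y (by simp) hk with h | h <;> rw [h] at hu'
  exacts [⟨x, y, hk, hv.1, hu'⟩, ⟨y, x, hk.symm, hv.2, hu'⟩]

def clean : ESD G D.keptGraph where
  ηv := D.cleanV
  ηe x y := {v | D.kept x y ∧ v ∈ D.ηe x y}
  ηi x y := {v | D.kept x y ∧ v ∈ D.ηi x y}
  ηt x y z := {v | D.keptTri x y z ∧ v ∈ D.ηt x y z}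
  ηe_symm x y := by
    ext v
    exact and_congr kept_comm (by rw [D.ηe_symm])
  ηt_symm12 x y z := by
    ext v
    exact and_congr ⟨Tri.swap12, Tri.swap12⟩ (by rw [D.ηt_symm12])
  ηt_symm23 x y z := by
    ext v
    exact and_congr ⟨Tri.swap23, Tri.swap23⟩ (by rw [D.ηt_symm23])
  ηe_empty _ _ h := Set.eq_empty_of_forall_notMem fun _ hv => h hv.1
  ηt_empty _ _ _ h := Set.eq_empty_of_forall_notMem fun _ hv => h hv.1
  ηi_sub x y _ hv := ⟨hv.1, D.ηi_sub x y hv.2⟩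
  cover v := by
    rcases D.cover v with ⟨x, hv⟩ | ⟨x, y, hv⟩ | ⟨x, y, z, hv⟩
    · exact Or.inl ⟨x, Or.inl (Or.inl hv)⟩
    · by_cases hk : D.kept x y
      · exact Or.inr (Or.inl ⟨x, y, hk, hv⟩)
      · exact Or.inl ⟨_, Or.inl (Or.inr (D.mem_deadEdgePart_edgeTarget hk hv))⟩
    · by_cases hk : D.keptTri x y z
      · exact Or.inr (Or.inr ⟨x, y, z, hk, hv⟩)
      · exact Or.inl ⟨_, Or.inr ⟨x, y, z, hk, rfl, hv⟩⟩
  disj_vv _ _ h := Set.eq_empty_of_forall_notMem fun _ hv => h (D.eq_of_mem_cleanV hv.1 hv.2)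
  disj_ve _ _ _ := Set.eq_empty_of_forall_notMem fun _ hv =>
    D.not_mem_cleanV_of_kept hv.2.1 hv.2.2 hv.1
  disj_vt _ _ _ _ := Set.eq_empty_of_forall_notMem fun _ hv =>
    D.not_mem_cleanV_of_keptTri hv.2.1 hv.2.2 hv.1
  disj_ee x y a b h₁ h₂ := Set.eq_empty_of_forall_notMem fun v hv =>
    (D.disj_ee x y a b h₁ h₂).subset ⟨hv.1.2, hv.2.2⟩
  disj_et x y a b c := Set.eq_empty_of_forall_notMem fun v hv =>
    (D.disj_et x y a b c).subset ⟨hv.1.2, hv.2.2⟩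
  disj_tt a b c d e f h := Set.eq_empty_of_forall_notMem fun v hv =>
    (D.disj_tt a b c d e f h).subset ⟨hv.1.2, hv.2.2⟩
  complete x y z hxy hxz hyz u hu v hv := D.complete x y z hxy.1 hxz.1 hyz u hu.2 v hv.2
  edge_cond u v huv := by
    cases D.link_of_adj huv with
    | vertex hu hv => exact Or.inl ⟨_, Or.inl (Or.inl hu), Or.inl (Or.inl hv)⟩
    | @edge x y _ _ hu hv =>
      by_cases hk : D.kept x y
      · exact Or.inr (Or.inl ⟨x, y, ⟨hk, hu⟩, ⟨hk, hv⟩⟩)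
      · exact Or.inl ⟨_, Or.inl (Or.inr (D.mem_deadEdgePart_edgeTarget hk hu)),
          Or.inl (Or.inr (D.mem_deadEdgePart_edgeTarget hk hv))⟩
    | @tri x y z _ _ hu hv =>
      by_cases hk : D.keptTri x y z
      · exact Or.inr (Or.inr (Or.inl ⟨x, y, z, ⟨hk, hu⟩, ⟨hk, hv⟩⟩))
      · exact Or.inl ⟨_, Or.inr ⟨x, y, z, hk, rfl, hu⟩, Or.inr ⟨x, y, z, hk, rfl, hv⟩⟩
    | @ifaces x y z _ _ hyz hu hv =>
      rcases D.kept_or_mem_cleanV_of_mem_ηi hu with hky | hcu <;>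
        rcases D.kept_or_mem_cleanV_of_mem_ηi hv with hkz | hcv
      · exact Or.inr (Or.inr (Or.inr (Or.inl
          ⟨x, y, z, hky, hkz, hyz, Or.inl ⟨⟨hky, hu⟩, ⟨hkz, hv⟩⟩⟩)))
      · exact Or.inr (Or.inr (Or.inr (Or.inr (Or.inl ⟨x, y, hky, Or.inl ⟨⟨hky, hu⟩, hcv⟩⟩))))
      · exact Or.inr (Or.inr (Or.inr (Or.inr (Or.inl ⟨x, z, hkz, Or.inr ⟨⟨hkz, hv⟩, hcu⟩⟩))))
      · exact Or.inl ⟨x, hcu, hcv⟩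
    | @ifaceVertex x y _ _ hu hv =>
      rcases D.kept_or_mem_cleanV_of_mem_ηi hu with hk | hcu
      · exact Or.inr (Or.inr (Or.inr (Or.inr (Or.inl
          ⟨x, y, hk, Or.inl ⟨⟨hk, hu⟩, Or.inl (Or.inl hv)⟩⟩))))
      · exact Or.inl ⟨x, hcu, Or.inl (Or.inl hv)⟩
    | @vertexIface x y _ _ hu hv =>
      rcases D.kept_or_mem_cleanV_of_mem_ηi hv with hk | hcv
      · exact Or.inr (Or.inr (Or.inr (Or.inr (Or.inl
          ⟨x, y, hk, Or.inr ⟨⟨hk, hv⟩, Or.inl (Or.inl hu)⟩⟩))))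
      · exact Or.inl ⟨x, Or.inl (Or.inl hu), hcv⟩
    | @triCore x y z _ _ hu hv =>
      by_cases hkt : D.keptTri x y z
      · have hk := kept_of_mem_core hv
        exact Or.inr (Or.inr (Or.inr (Or.inr (Or.inr
          ⟨x, y, z, hkt, Or.inl ⟨⟨hkt, hu⟩, ⟨hk, hv.1⟩, ⟨hk.symm, hv.2⟩⟩⟩))))
      obtain ⟨s, o, hk, hvs, hus⟩ := D.exists_kept_of_not_keptTri hkt hu hv
      exact Or.inr (Or.inr (Or.inr (Or.inr (Or.inl ⟨s, o, hk, Or.inr ⟨⟨hk, hvs⟩, hus⟩⟩))))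
    | @coreTri x y z _ _ hu hv =>
      by_cases hkt : D.keptTri x y z
      · have hk := kept_of_mem_core hu
        exact Or.inr (Or.inr (Or.inr (Or.inr (Or.inr
          ⟨x, y, z, hkt, Or.inr ⟨⟨hkt, hv⟩, ⟨hk, hu.1⟩, ⟨hk.symm, hu.2⟩⟩⟩))))
      obtain ⟨s, o, hk, hus, hvs⟩ := D.exists_kept_of_not_keptTri hkt hv hu
      exact Or.inr (Or.inr (Or.inr (Or.inr (Or.inl ⟨s, o, hk, Or.inl ⟨⟨hk, hus⟩, hvs⟩⟩))))

lemma clean_ηi_nonempty {x y : H'} (hk : D.keptGraph.Adj x y) : (D.clean.ηi x y).Nonempty :=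
  let ⟨v, hv⟩ := hk.2.1
  ⟨v, hk, hv⟩

section Small

variable {D} [Fintype V] {w : V → ℕ} {b : ℕ}

lemma ParticlesSmall.clean (hD : D.ParticlesSmall w b) (hV : ∀ t, wsum w (D.cleanV t) ≤ b)
    (hE : ∀ x y, D.kept x y → wsum w (D.fullEdge x y ∪ D.cleanV x ∪ D.cleanV y) ≤ b) :
    D.clean.ParticlesSmall w b := by
  obtain ⟨-, hint, -, -, htri⟩ := hD
  refine ⟨hV, fun x y hk => (wsum_mono w ?_).trans (hint x y hk.1),
    fun x y hk => (wsum_mono w ?_).trans (hE x y hk),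
    fun x y hk => (wsum_mono w ?_).trans (hE x y hk),
    fun x y z hk => (wsum_mono w ?_).trans (htri x y z ⟨hk.1.1, hk.2.1.1, hk.2.2.1⟩)⟩
  · rintro v ⟨⟨-, hv⟩, hn⟩
    exact ⟨hv, fun h => hn (h.imp (⟨hk, ·⟩) (⟨hk.symm, ·⟩))⟩
  · rintro v (hv | ⟨⟨-, hv⟩, -⟩)
    exacts [Or.inl (Or.inr hv), Or.inl (Or.inl (D.mem_fullEdge_of_mem_ηe hv))]
  · rintro v (((hv | hv) | ⟨-, hv⟩) | ⟨r, -, hv⟩)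
    exacts [Or.inl (Or.inr hv), Or.inr hv, Or.inl (Or.inl (D.mem_fullEdge_of_mem_ηe hv)),
      Or.inl (Or.inl (D.mem_fullEdge_of_mem_ηt hv))]
  · exact fun v hv => hv.2

end Small

section Restriction

lemma finite_setOf_nonempty [Finite V] :
    {x | (D.ηv x).Nonempty ∨ ∃ y, (D.ηe x y).Nonempty}.Finite := by
  have hfiber : ∀ v : V, {x | v ∈ D.ηv x ∨ ∃ y, v ∈ D.ηe x y}.Finite := by
    intro v
    rcases D.cover v with ⟨x₀, h₀⟩ | ⟨x₀, y₀, h₀⟩ | ⟨x₀, y₀, z₀, h₀⟩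
    · refine (Set.finite_singleton x₀).subset ?_
      rintro x (hx | ⟨y, hy⟩)
      exacts [D.eq_of_mem_ηv hx h₀, absurd hy (D.not_mem_ηe_of_mem_ηv h₀)]
    · refine ((Set.finite_singleton y₀).insert x₀).subset ?_
      rintro x (hx | ⟨y, hy⟩)
      · exact absurd h₀ (D.not_mem_ηe_of_mem_ηv hx)
      · rcases D.eq_or_swap_of_mem_ηe hy h₀ with ⟨rfl, -⟩ | ⟨rfl, -⟩ <;> simp
    · refine Set.finite_empty.subset ?_
      rintro x (hx | ⟨y, hy⟩)
      exacts [absurd h₀ (D.not_mem_ηt_of_mem_ηv hx), absurd h₀ (D.not_mem_ηt_of_mem_ηe hy)]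
  refine (Set.finite_iUnion hfiber).subset ?_
  rintro x (⟨v, hv⟩ | ⟨y, v, hv⟩)
  exacts [Set.mem_iUnion.mpr ⟨v, Or.inl hv⟩, Set.mem_iUnion.mpr ⟨v, Or.inr ⟨y, hv⟩⟩]

variable {α : Type*} (f : α ↪ H')

def comap (hf : ∀ x, (∃ y, H.Adj x y) ∨ (D.ηv x).Nonempty → x ∈ Set.range f) :
    ESD G (H.comap f) where
  ηv i := D.ηv (f i)
  ηe i j := D.ηe (f i) (f j)
  ηi i j := D.ηi (f i) (f j)
  ηt i j k := D.ηt (f i) (f j) (f k)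
  ηe_symm _ _ := D.ηe_symm _ _
  ηt_symm12 _ _ _ := D.ηt_symm12 _ _ _
  ηt_symm23 _ _ _ := D.ηt_symm23 _ _ _
  ηe_empty _ _ h := D.ηe_empty _ _ h
  ηt_empty _ _ _ h := D.ηt_empty _ _ _ h
  ηi_sub _ _ := D.ηi_sub _ _
  cover v := by
    have hadj : ∀ {x y}, H.Adj x y → ∃ i, f i = x := fun h => hf _ (Or.inl ⟨_, h⟩)
    rcases D.cover v with ⟨x, hv⟩ | ⟨x, y, hv⟩ | ⟨x, y, z, hv⟩
    · obtain ⟨i, rfl⟩ := hf x (Or.inr ⟨v, hv⟩)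
      exact Or.inl ⟨i, hv⟩
    · have hxy := D.adj_of_mem_ηe hv
      obtain ⟨i, rfl⟩ := hadj hxy
      obtain ⟨j, rfl⟩ := hadj hxy.symm
      exact Or.inr (Or.inl ⟨i, j, hv⟩)
    · obtain ⟨hxy, hyz, -⟩ := D.tri_of_mem_ηt hv
      obtain ⟨i, rfl⟩ := hadj hxy
      obtain ⟨j, rfl⟩ := hadj hyz
      obtain ⟨k, rfl⟩ := hadj hyz.symm
      exact Or.inr (Or.inr ⟨i, j, k, hv⟩)
  disj_vv _ _ h := D.disj_vv _ _ (f.injective.ne h)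
  disj_ve _ _ _ := D.disj_ve _ _ _
  disj_vt _ _ _ _ := D.disj_vt _ _ _ _
  disj_ee _ _ _ _ h₁ h₂ := D.disj_ee _ _ _ _ (fun h => h₁ ⟨f.injective h.1, f.injective h.2⟩)
    (fun h => h₂ ⟨f.injective h.1, f.injective h.2⟩)
  disj_et _ _ _ _ _ := D.disj_et _ _ _ _ _
  disj_tt _ _ _ _ _ _ h := D.disj_tt _ _ _ _ _ _ fun h' => h <|
    Set.image_injective.mpr f.injective (by simpa only [Set.image_insert_eq, Set.image_singleton])
  complete _ _ _ hij hik hjk := D.complete _ _ _ hij hik (f.injective.ne hjk)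
  edge_cond u v huv := by
    have hadj : ∀ {x y}, H.Adj x y → ∃ i, f i = x := fun h => hf _ (Or.inl ⟨_, h⟩)
    rcases D.edge_cond u v huv with ⟨x, hu, hv⟩ | ⟨x, y, hu, hv⟩ | ⟨x, y, z, hu, hv⟩ |
      ⟨x, y, z, hxy, hxz, hyz, h⟩ | ⟨x, y, hxy, h⟩ | ⟨x, y, z, htri, h⟩
    · obtain ⟨i, rfl⟩ := hf x (Or.inr ⟨u, hu⟩)
      exact Or.inl ⟨i, hu, hv⟩
    · have hxy := D.adj_of_mem_ηe hu
      obtain ⟨i, rfl⟩ := hadj hxy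
      obtain ⟨j, rfl⟩ := hadj hxy.symm
      exact Or.inr (Or.inl ⟨i, j, hu, hv⟩)
    · obtain ⟨hxy, hyz, -⟩ := D.tri_of_mem_ηt hu
      obtain ⟨i, rfl⟩ := hadj hxy
      obtain ⟨j, rfl⟩ := hadj hyz
      obtain ⟨k, rfl⟩ := hadj hyz.symm
      exact Or.inr (Or.inr (Or.inl ⟨i, j, k, hu, hv⟩))
    · obtain ⟨i, rfl⟩ := hadj hxy
      obtain ⟨j, rfl⟩ := hadj hxy.symm
      obtain ⟨k, rfl⟩ := hadj hxz.symm
      exact Or.inr (Or.inr (Or.inr (Or.inl ⟨i, j, k, hxy, hxz, fun h => hyz (congrArg f h), h⟩)))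
    · obtain ⟨i, rfl⟩ := hadj hxy
      obtain ⟨j, rfl⟩ := hadj hxy.symm
      exact Or.inr (Or.inr (Or.inr (Or.inr (Or.inl ⟨i, j, hxy, h⟩))))
    · obtain ⟨i, rfl⟩ := hadj htri.1
      obtain ⟨j, rfl⟩ := hadj htri.2.1
      obtain ⟨k, rfl⟩ := hadj htri.2.1.symm
      exact Or.inr (Or.inr (Or.inr (Or.inr (Or.inr ⟨i, j, k, htri, h⟩))))

variable {D f}

lemma comap_isRigid {hf : ∀ x, (∃ y, H.Adj x y) ∨ (D.ηv x).Nonempty → x ∈ Set.range f}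
    (hrange : ∀ i, (∃ y, H.Adj (f i) y) ∨ (D.ηv (f i)).Nonempty)
    (hI : ∀ x y, H.Adj x y → (D.ηi x y).Nonempty) : (D.comap f hf).IsRigid := by
  refine ⟨fun i j hij => hI _ _ hij, fun i hi => ?_⟩
  rcases hrange i with ⟨y, hy⟩ | hne
  · obtain ⟨j, rfl⟩ := hf y (Or.inl ⟨_, hy.symm⟩)
    exact absurd hy (hi j)
  · exact hne

lemma comap_particlesSmall [Fintype V] {w : V → ℕ} {b : ℕ}
    {hf : ∀ x, (∃ y, H.Adj x y) ∨ (D.ηv x).Nonempty → x ∈ Set.range f}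
    (hD : D.ParticlesSmall w b) : (D.comap f hf).ParticlesSmall w b := by
  obtain ⟨hv, hint, hhalf, hfull, htri⟩ := hD
  refine ⟨fun i => hv _, fun i j => hint _ _, fun i j => hhalf _ _,
    fun i j hij => (wsum_mono w ?_).trans (hfull _ _ hij), fun i j k => htri _ _ _⟩
  rintro v (hv | ⟨r, hr⟩)
  exacts [Or.inl hv, Or.inr ⟨f r, hr⟩]

/-- Only finitely many vertices of `H` carry an edge or a nonempty `η`, so they can be
re-indexed by a type in `Type`. -/
lemma exists_rigid_of_ηi_nonempty [Fintype V] {w : V → ℕ} {b : ℕ}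
    (hI : ∀ x y, H.Adj x y → (D.ηi x y).Nonempty) (hD : D.ParticlesSmall w b) :
    ∃ (H₂' : Type) (H₂ : SimpleGraph H₂') (D' : ESD G H₂), D'.IsRigid ∧ D'.ParticlesSmall w b := by
  set S := {x | (∃ y, H.Adj x y) ∨ (D.ηv x).Nonempty}
  have hS : S.Finite := D.finite_setOf_nonempty.subset fun x hx =>
    hx.elim (fun ⟨y, hxy⟩ => Or.inr ⟨y, (hI x y hxy).mono (D.ηi_sub x y)⟩) Or.inl
  have := hS.to_subtype
  let f : Shrink.{0} S ↪ H' :=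
    (equivShrink.{0} S).symm.toEmbedding.trans (Function.Embedding.subtype _)
  have hf : ∀ x ∈ S, x ∈ Set.range f := fun x hx => ⟨equivShrink.{0} S ⟨x, hx⟩, by simp [f]⟩
  exact ⟨_, _, D.comap f hf, comap_isRigid (fun i => ((equivShrink.{0} S).symm i).2) hI,
    comap_particlesSmall hD⟩

end Restriction

end ESD

/-- from an extended strip decomposition with all particles of weight
at most `b ≥ W/2`, either obtain a rigid one with the same bound, or a set of at
most two vertices whose closed neighborhood's removal leaves components of weight
at most `b`. -/
theorem make_rigid {V : Type*} {H' : Type*} [Fintype V]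
    (G : SimpleGraph V) (w : V → ℕ) (b : ℕ) (hb : wsum w Set.univ ≤ 2 * b)
    (H : SimpleGraph H') (D : ESD G H) (hD : D.ParticlesSmall w b) :
    (∃ (H₂' : Type) (H₂ : SimpleGraph H₂') (D' : ESD G H₂),
      D'.IsRigid ∧ D'.ParticlesSmall w b) ∨
    (∃ X : Finset V, X.card ≤ 2 ∧
      CompsSmall G w (Set.univ \ closedNbhd G (↑X : Set V)) b) := by
  by_cases hE : ∃ x y, D.kept x y ∧ b < wsum w (D.fullEdge x y ∪ D.cleanV x ∪ D.cleanV y)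
  · obtain ⟨x, y, hk, hbig⟩ := hE
    exact Or.inr (D.exists_compsSmall_of_kept hD hb hk hbig)
  simp only [not_exists, not_and, not_lt] at hE
  by_cases hV : ∃ x, b < wsum w (D.cleanV x)
  · obtain ⟨x, hbig⟩ := hV
    have hx : ∀ d, ¬ D.kept x d := fun d hk =>
      (hbig.trans_le (wsum_mono w (Set.subset_union_right.trans Set.subset_union_left))).not_ge
        (hE x d hk)
    exact Or.inr (D.exists_compsSmall_of_not_kept hD hb hx hbig)
  simp only [not_exists, not_lt] at hV
  exact Or.inl (D.clean.exists_rigid_of_ηi_nonempty (fun _ _ => D.clean_ηi_nonempty)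
    (hD.clean hV hE))
end

section
/- Let (H, η) be an extended strip decomposition of a graph G and let Q = (x₀, …, x_k) be an induced path in G between peripheral vertices. Let uv be an edge of H such that |V(Q) ∩ η(uv, u)| ≥ 2, and let L(uv,u), R(uv,u) denote the minimum and maximum indices i with x_i ∈ η(uv, u), and similarly for v. Then L(uv, v) = L(uv, u) and R(uv, v) = R(uv, u); in particular x_{L(uv,u)} and x_{R(uv,u)} both belong to η(uv, u) ∩ η(uv, v). -/
/-! Write `A = η(uv, u)` and `B = η(uv, v)`. Let `x_t` be the first vertex of the path in `A`
and `x_s`, `s > t`, another one. No `x_j` with `j < t` lies in an interface `η(uw, u)` with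
`w ≠ v`, since it would be adjacent to both `x_t` and `x_s`. So if `x_0, …, x_t` avoided `B`,
walking back from `x_t` would keep the path inside the particle `A_{uv}^u`, and the
peripheral vertex `x_0` would then have to satisfy `A = {x_0}`, which is absurd. Hence `B`
meets the path at or before `L(uv, u)` and, by reversing the path, at or after `R(uv, u)`.
In particular `B` meets the path twice, and the same argument with `u` and `v` exchanged
squeezes `L(uv, v) = L(uv, u)` and `R(uv, v) = R(uv, u)`. -/

lemma Nat.sInf_eq_and_sSup_eq_of_straddle {P Q : Set ℕ} (hPb : BddAbove P) (hQb : BddAbove Q)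
    (hP : P.Nontrivial) (hPQ : (∃ j ∈ Q, j ≤ sInf P) ∧ ∃ j ∈ Q, sSup P ≤ j)
    (hQP : Q.Nontrivial → (∃ i ∈ P, i ≤ sInf Q) ∧ ∃ i ∈ P, sSup Q ≤ i) :
    sInf Q = sInf P ∧ sSup Q = sSup P := by
  obtain ⟨⟨j₁, hj₁, hj₁P⟩, j₂, hj₂, hj₂P⟩ := hPQ
  obtain ⟨a, ha, b, hb, hab⟩ := hP.exists_lt
  have := Nat.sInf_le ha
  have := le_csSup hPb hb
  obtain ⟨⟨i₁, hi₁, hi₁Q⟩, i₂, hi₂, hi₂Q⟩ := hQP ⟨j₁, hj₁, j₂, hj₂, by omega⟩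
  have := Nat.sInf_le hi₁
  have := le_csSup hPb hi₂
  have := Nat.sInf_le hj₁
  have := le_csSup hQb hj₂
  omega

namespace ESD

variable {V : Type*} {H' : Type*} {G : SimpleGraph V} {H : SimpleGraph H'}

/-- The particle `A_{xy}^x` of the paper. -/
def halfEdgeParticle (D : ESD G H) (x y : H') : Set V :=
  D.ηv x ∪ (D.ηe x y \ D.ηi y x)

variable (D : ESD G H) {x y z u v : H'} {a b : V}

lemma adj_of_mem_ηi_s19 (ha : a ∈ D.ηi x y) : H.Adj x y := by
  by_contra h
  simpa [D.ηe_empty x y h] using D.ηi_sub x y ha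

lemma adj_of_mem_ηi_of_mem_ηi (ha : a ∈ D.ηi x y) (hb : b ∈ D.ηi x z) (hyz : y ≠ z) :
    G.Adj a b :=
  D.complete x y z (D.adj_of_mem_ηi_s19 ha) (D.adj_of_mem_ηi_s19 hb) hyz a ha b hb

lemma eq_or_eq_of_mem_ηe_of_mem_ηe (hx : a ∈ D.ηe x y) (hu : a ∈ D.ηe u v) :
    (x = u ∧ y = v) ∨ (x = v ∧ y = u) := by
  by_contra! h
  have := D.disj_ee x y u v (fun h' => h.1 h'.1 h'.2) (fun h' => h.2 h'.1 h'.2)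
  exact this.subset ⟨hx, hu⟩

lemma eq_of_mem_ηv_of_mem_halfEdgeParticle (hx : a ∈ D.ηv x)
    (ha : a ∈ D.halfEdgeParticle u v) : x = u := by
  rcases ha with hu | ⟨he, -⟩
  · by_contra h
    exact (D.disj_vv x u h).subset ⟨hx, hu⟩
  · exact ((D.disj_ve x u v).subset ⟨hx, he⟩).elim

lemma notMem_ηi_of_mem_halfEdgeParticle (ha : a ∈ D.halfEdgeParticle u v) :
    a ∉ D.ηi v u := by
  rcases ha with hu | ⟨-, hv⟩
  · exact fun hv => (D.disj_ve u v u).subset ⟨hu, D.ηi_sub v u hv⟩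
  · exact hv

lemma eq_of_mem_ηi_of_mem_halfEdgeParticle (hx : a ∈ D.ηi x y)
    (ha : a ∈ D.halfEdgeParticle u v) : x = u ∧ y = v := by
  rcases ha with hu | ⟨he, hv⟩
  · exact ((D.disj_ve u x y).subset ⟨hu, D.ηi_sub x y hx⟩).elim
  · exact (D.eq_or_eq_of_mem_ηe_of_mem_ηe (D.ηi_sub x y hx) he).resolve_right
      fun ⟨hxv, hyu⟩ => hv (hxv ▸ hyu ▸ hx)

lemma mem_ηe_of_mem_ηe_of_mem_halfEdgeParticle (hbe : b ∈ D.ηe x y)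
    (hb : b ∈ D.halfEdgeParticle u v) (ha : a ∈ D.ηe x y) : a ∈ D.ηe u v := by
  rcases hb with hu | ⟨he, -⟩
  · exact ((D.disj_ve u x y).subset ⟨hu, hbe⟩).elim
  · rcases D.eq_or_eq_of_mem_ηe_of_mem_ηe hbe he with ⟨rfl, rfl⟩ | ⟨rfl, rfl⟩
    · exact ha
    · rwa [D.ηe_symm]

lemma notMem_halfEdgeParticle_of_mem_ηt (hb : b ∈ D.ηt x y z) :
    b ∉ D.halfEdgeParticle u v := by
  rintro (hu | ⟨he, -⟩)
  · exact (D.disj_vt u x y z).subset ⟨hu, hb⟩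
  · exact (D.disj_et u v x y z).subset ⟨he, hb⟩

lemma mem_halfEdgeParticle_of_adj (hab : G.Adj a b) (hb : b ∈ D.halfEdgeParticle u v)
    (hav : a ∉ D.ηi v u) (hau : ∀ w, a ∉ D.ηi u w) : a ∈ D.halfEdgeParticle u v := by
  rcases D.edge_cond a b hab with
    ⟨x, hax, hbx⟩ | ⟨x, y, hae, hbe⟩ | ⟨x, y, z, -, hbt⟩ |
    ⟨x, y, z, -, -, -, ⟨hay, hbz⟩ | ⟨hby, haz⟩⟩ | ⟨x, y, -, ⟨hay, hbx⟩ | ⟨hby, hax⟩⟩ |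
    ⟨x, y, z, -, ⟨-, hbxy, hbyx⟩ | ⟨hbt', -⟩⟩
  · obtain rfl := D.eq_of_mem_ηv_of_mem_halfEdgeParticle hbx hb
    exact Or.inl hax
  · exact Or.inr ⟨D.mem_ηe_of_mem_ηe_of_mem_halfEdgeParticle hbe hb hae, hav⟩
  · exact (D.notMem_halfEdgeParticle_of_mem_ηt hbt hb).elim
  · obtain ⟨rfl, -⟩ := D.eq_of_mem_ηi_of_mem_halfEdgeParticle hbz hb
    exact (hau y hay).elim
  · obtain ⟨rfl, -⟩ := D.eq_of_mem_ηi_of_mem_halfEdgeParticle hby hb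
    exact (hau z haz).elim
  · obtain rfl := D.eq_of_mem_ηv_of_mem_halfEdgeParticle hbx hb
    exact (hau y hay).elim
  · obtain ⟨rfl, -⟩ := D.eq_of_mem_ηi_of_mem_halfEdgeParticle hby hb
    exact Or.inl hax
  · obtain ⟨rfl, rfl⟩ := D.eq_of_mem_ηi_of_mem_halfEdgeParticle hbxy hb
    exact (D.notMem_ηi_of_mem_halfEdgeParticle hb hbyx).elim
  · exact (D.notMem_halfEdgeParticle_of_mem_ηt hbt' hb).elim

lemma Peripheral.ηi_eq_singleton {D : ESD G H} (hz : D.Peripheral a)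
    (ha : a ∈ D.halfEdgeParticle u v) : D.ηi u v = {a} := by
  obtain ⟨x, y, -, -, hxy, -⟩ := hz
  obtain ⟨rfl, rfl⟩ := D.eq_of_mem_ηi_of_mem_halfEdgeParticle (hxy ▸ Set.mem_singleton a) ha
  exact hxy

end ESD

def List.indicesIn {V : Type*} (l : List V) (A : Set V) : Set ℕ :=
  {i | ∃ h : i < l.length, l[i] ∈ A}

namespace List

variable {V : Type*} {l : List V} {A B : Set V} {i : ℕ}

lemma lt_length_of_mem_indicesIn (hi : i ∈ l.indicesIn A) : i < l.length := hi.1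

lemma bddAbove_indicesIn : BddAbove (l.indicesIn A) :=
  ⟨l.length, fun _ hi => (lt_length_of_mem_indicesIn hi).le⟩

lemma mem_indicesIn_inter (hA : i ∈ l.indicesIn A) (hB : i ∈ l.indicesIn B) :
    i ∈ l.indicesIn (A ∩ B) :=
  ⟨hA.1, hA.2, hB.2⟩

lemma mem_indicesIn_reverse :
    i ∈ l.reverse.indicesIn A ↔ i < l.length ∧ l.length - 1 - i ∈ l.indicesIn A := by
  simp only [indicesIn, length_reverse, getElem_reverse]
  exact ⟨fun ⟨hi, h⟩ => ⟨hi, by omega, h⟩, fun ⟨hi, _, h⟩ => ⟨hi, h⟩⟩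

lemma sub_mem_indicesIn_reverse (hi : i ∈ l.indicesIn A) :
    l.length - 1 - i ∈ l.reverse.indicesIn A := by
  have := lt_length_of_mem_indicesIn hi
  refine mem_indicesIn_reverse.2 ⟨by omega, ?_⟩
  rwa [show l.length - 1 - (l.length - 1 - i) = i by omega]

end List

namespace IsInducedPathList

variable {V : Type*} {G : SimpleGraph V} {l : List V}

lemma adj_getElem_iff (hl : IsInducedPathList G l) {i j : ℕ} (hi : i < l.length)
    (hj : j < l.length) : G.Adj l[i] l[j] ↔ i + 1 = j ∨ j + 1 = i :=
  hl.2.2 i j hi hj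

lemma reverse (hl : IsInducedPathList G l) : IsInducedPathList G l.reverse := by
  refine ⟨by simpa using hl.1, List.nodup_reverse.2 hl.2.1, fun i j hi hj => ?_⟩
  simp only [List.length_reverse] at hi hj
  simp only [List.get_eq_getElem, List.getElem_reverse]
  rw [hl.adj_getElem_iff]
  omega

end IsInducedPathList

namespace ESD

variable {V : Type*} {H' : Type*} {G : SimpleGraph V} {H : SimpleGraph H'}
  (D : ESD G H) {u v : H'} {l : List V}

lemma exists_opposite_interface_le (hl : IsInducedPathList G l) (hne : l ≠ [])
    (hx : D.Peripheral (l.head hne)) {t s : ℕ} (hts : t < s)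
    (ht : t ∈ l.indicesIn (D.ηi u v)) (hs : s ∈ l.indicesIn (D.ηi u v))
    (hfirst : ∀ j < t, j ∉ l.indicesIn (D.ηi u v)) :
    ∃ j ≤ t, j ∈ l.indicesIn (D.ηi v u) := by
  by_contra! hv
  obtain ⟨htl, hxt⟩ := ht
  obtain ⟨hsl, hxs⟩ := hs
  have hleft (j : ℕ) (hj : j < t) (w : H') : l[j] ∉ D.ηi u w := by
    intro hjw
    obtain rfl | hwv := eq_or_ne w v
    · exact hfirst j hj ⟨_, hjw⟩
    · have := (hl.adj_getElem_iff _ _).1 (D.adj_of_mem_ηi_of_mem_ηi hjw hxt hwv)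
      have := (hl.adj_getElem_iff _ _).1 (D.adj_of_mem_ηi_of_mem_ηi hjw hxs hwv)
      omega
  have hwalk (j : ℕ) (hj : j ≤ t) : l[j] ∈ D.halfEdgeParticle u v := by
    induction hj using Nat.decreasingInduction with
    | self => exact Or.inr ⟨D.ηi_sub u v hxt, fun h => hv t le_rfl ⟨htl, h⟩⟩
    | of_succ j hjt ih =>
      exact D.mem_halfEdgeParticle_of_adj ((hl.adj_getElem_iff _ _).2 (Or.inl rfl)) ih
        (fun h => hv j hjt.le ⟨_, h⟩) (hleft j hjt)
  have h0 := hx.ηi_eq_singleton (List.head_eq_getElem hne ▸ hwalk 0 t.zero_le)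
  rw [h0] at hxt hxs
  have := hl.2.1.getElem_inj_iff.1 (hxt.trans hxs.symm)
  omega

lemma exists_opposite_interface_ge (hl : IsInducedPathList G l) (hne : l ≠ [])
    (hy : D.Peripheral (l.getLast hne)) {t s : ℕ} (hst : s < t)
    (ht : t ∈ l.indicesIn (D.ηi u v)) (hs : s ∈ l.indicesIn (D.ηi u v))
    (hlast : ∀ j, t < j → j ∉ l.indicesIn (D.ηi u v)) :
    ∃ j ≥ t, j ∈ l.indicesIn (D.ηi v u) := by
  have hne' : l.reverse ≠ [] := by simpa using hne
  have htl := List.lt_length_of_mem_indicesIn ht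
  obtain ⟨j, hjt, hj⟩ := D.exists_opposite_interface_le hl.reverse hne'
    (by rwa [List.head_reverse]) (by omega) (List.sub_mem_indicesIn_reverse ht)
    (List.sub_mem_indicesIn_reverse hs) fun j hj hjA => by
      obtain ⟨hjl, hjA⟩ := List.mem_indicesIn_reverse.1 hjA
      exact hlast _ (by omega) hjA
  obtain ⟨hjl, hj⟩ := List.mem_indicesIn_reverse.1 hj
  exact ⟨_, by omega, hj⟩

lemma exists_opposite_interface_le_sInf (hl : IsInducedPathList G l) (hne : l ≠ [])
    (hx : D.Peripheral (l.head hne)) (hA : (l.indicesIn (D.ηi u v)).Nontrivial) :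
    ∃ j ∈ l.indicesIn (D.ηi v u), j ≤ sInf (l.indicesIn (D.ηi u v)) := by
  obtain ⟨i, hi, s, hs, his⟩ := hA.exists_lt
  obtain ⟨j, hj, hjv⟩ := D.exists_opposite_interface_le hl hne hx
    ((Nat.sInf_le hi).trans_lt his) (Nat.sInf_mem ⟨i, hi⟩) hs fun _ => Nat.notMem_of_lt_sInf
  exact ⟨j, hjv, hj⟩

lemma exists_opposite_interface_ge_sSup (hl : IsInducedPathList G l) (hne : l ≠ [])
    (hy : D.Peripheral (l.getLast hne)) (hA : (l.indicesIn (D.ηi u v)).Nontrivial) :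
    ∃ j ∈ l.indicesIn (D.ηi v u), sSup (l.indicesIn (D.ηi u v)) ≤ j := by
  obtain ⟨s, hs, i, hi, hsi⟩ := hA.exists_lt
  obtain ⟨j, hj, hjv⟩ := D.exists_opposite_interface_ge hl hne hy
    (hsi.trans_le (le_csSup List.bddAbove_indicesIn hi))
    (Nat.sSup_mem ⟨i, hi⟩ List.bddAbove_indicesIn) hs
    fun _ hj hjA => (hj.trans_le (le_csSup List.bddAbove_indicesIn hjA)).false
  exact ⟨j, hjv, hj⟩

end ESD

theorem interface_extremes_coincide_general {V : Type*} {H' : Type*}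
    (G : SimpleGraph V) (H : SimpleGraph H') (D : ESD G H)
    (l : List V) (hl : IsInducedPathList G l) (hne : l ≠ [])
    (hx : D.Peripheral (l.head hne)) (hy : D.Peripheral (l.getLast hne))
    (u v : H')
    (h2 : ∃ i j : ℕ, i ≠ j ∧ ∃ (hi : i < l.length) (hj : j < l.length),
      l.get ⟨i, hi⟩ ∈ D.ηi u v ∧ l.get ⟨j, hj⟩ ∈ D.ηi u v) :
    {i : ℕ | ∃ h : i < l.length, l.get ⟨i, h⟩ ∈ D.ηi v u}.Nonempty ∧
    sInf {i : ℕ | ∃ h : i < l.length, l.get ⟨i, h⟩ ∈ D.ηi v u} =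
      sInf {i : ℕ | ∃ h : i < l.length, l.get ⟨i, h⟩ ∈ D.ηi u v} ∧
    sSup {i : ℕ | ∃ h : i < l.length, l.get ⟨i, h⟩ ∈ D.ηi v u} =
      sSup {i : ℕ | ∃ h : i < l.length, l.get ⟨i, h⟩ ∈ D.ηi u v} ∧
    (∃ h : sInf {i : ℕ | ∃ h : i < l.length, l.get ⟨i, h⟩ ∈ D.ηi u v} < l.length,
      l.get ⟨sInf {i : ℕ | ∃ h : i < l.length, l.get ⟨i, h⟩ ∈ D.ηi u v}, h⟩ ∈
        D.ηi u v ∩ D.ηi v u) ∧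
    (∃ h : sSup {i : ℕ | ∃ h : i < l.length, l.get ⟨i, h⟩ ∈ D.ηi u v} < l.length,
      l.get ⟨sSup {i : ℕ | ∃ h : i < l.length, l.get ⟨i, h⟩ ∈ D.ηi u v}, h⟩ ∈
        D.ηi u v ∩ D.ηi v u) := by
  have straddle {a b : H'} (h : (l.indicesIn (D.ηi a b)).Nontrivial) :
      (∃ j ∈ l.indicesIn (D.ηi b a), j ≤ sInf (l.indicesIn (D.ηi a b))) ∧
        ∃ j ∈ l.indicesIn (D.ηi b a), sSup (l.indicesIn (D.ηi a b)) ≤ j :=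
    ⟨D.exists_opposite_interface_le_sInf hl hne hx h,
      D.exists_opposite_interface_ge_sSup hl hne hy h⟩
  have hA : (l.indicesIn (D.ηi u v)).Nontrivial := by
    obtain ⟨i, j, hij, hi, hj, hiA, hjA⟩ := h2
    exact ⟨i, ⟨hi, hiA⟩, j, ⟨hj, hjA⟩, hij⟩
  obtain ⟨hinf, hsup⟩ := Nat.sInf_eq_and_sSup_eq_of_straddle List.bddAbove_indicesIn
    List.bddAbove_indicesIn hA (straddle hA) straddle
  obtain ⟨⟨j, hj, -⟩, -⟩ := straddle hA
  have hB : (l.indicesIn (D.ηi v u)).Nonempty := ⟨j, hj⟩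
  refine ⟨hB, hinf, hsup, List.mem_indicesIn_inter (Nat.sInf_mem hA.nonempty) ?_,
    List.mem_indicesIn_inter (Nat.sSup_mem hA.nonempty List.bddAbove_indicesIn) ?_⟩
  · exact hinf ▸ Nat.sInf_mem hB
  · exact hsup ▸ Nat.sSup_mem hB List.bddAbove_indicesIn

/-- if an induced path between peripheral vertices meets an interface
`η(uv, u)` at least twice, the extreme indices in `η(uv, u)` and `η(uv, v)` coincide,
and the corresponding vertices lie in `η(uv, u) ∩ η(uv, v)`. -/
theorem interface_extremes_coincide {V : Type*} {H' : Type*}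
    (G : SimpleGraph V) (H : SimpleGraph H') (D : ESD G H)
    (l : List V) (hl : IsInducedPathList G l) (hne : l ≠ [])
    (hx : D.Peripheral (l.head hne)) (hy : D.Peripheral (l.getLast hne))
    (u v : H') (huv : H.Adj u v)
    (h2 : ∃ i j : ℕ, i ≠ j ∧ ∃ (hi : i < l.length) (hj : j < l.length),
      l.get ⟨i, hi⟩ ∈ D.ηi u v ∧ l.get ⟨j, hj⟩ ∈ D.ηi u v) :
    {i : ℕ | ∃ h : i < l.length, l.get ⟨i, h⟩ ∈ D.ηi v u}.Nonempty ∧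
    sInf {i : ℕ | ∃ h : i < l.length, l.get ⟨i, h⟩ ∈ D.ηi v u} =
      sInf {i : ℕ | ∃ h : i < l.length, l.get ⟨i, h⟩ ∈ D.ηi u v} ∧
    sSup {i : ℕ | ∃ h : i < l.length, l.get ⟨i, h⟩ ∈ D.ηi v u} =
      sSup {i : ℕ | ∃ h : i < l.length, l.get ⟨i, h⟩ ∈ D.ηi u v} ∧
    (∃ h : sInf {i : ℕ | ∃ h : i < l.length, l.get ⟨i, h⟩ ∈ D.ηi u v} < l.length,
      l.get ⟨sInf {i : ℕ | ∃ h : i < l.length, l.get ⟨i, h⟩ ∈ D.ηi u v}, h⟩ ∈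
        D.ηi u v ∩ D.ηi v u) ∧
    (∃ h : sSup {i : ℕ | ∃ h : i < l.length, l.get ⟨i, h⟩ ∈ D.ηi u v} < l.length,
      l.get ⟨sSup {i : ℕ | ∃ h : i < l.length, l.get ⟨i, h⟩ ∈ D.ηi u v}, h⟩ ∈
        D.ηi u v ∩ D.ηi v u) :=
  interface_extremes_coincide_general G H D l hl hne hx hy u v h2
end
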